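/- arXiv:2006.15086 — 2 statements merged into one kernel-verified Lean document; each statement's English description precedes it below -/
import Mathlib

section
/- For μ̂ ∈ P_a^{(n)}, λ ∈ ℤʳ, and 0 ≤ i ≤ r−1 with s_i^{(n)}λ ≠ λ, one has γ(s_i^{(n)} * μ̂; λ) = γ(μ̂; s_i^{(n)} λ), where on the left s_i^{(n)} acts linearly on P_a^{(n)} and on the right it acts affinely on ℤʳ. -/
/-- γ(μ̂; λ) for μ̂ = nν + sn²δ ∈ P_a⁽ⁿ⁾ (recorded by the pair (ν, s)) and λ ∈ ℤʳ:
γ(μ̂; λ) = q^{−sn − (nν,λ)/n} · ∏_{α ∈ Φ₊} σ((λ, α))^{(nν,α)/n}. -/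
def gammaF {F : Type*} [Field F] (r : ℕ) (q : F) (σ : ℤ → F) (n : ℕ)
    (ν : Fin (r + 2) → ℤ) (s : ℤ) (lam : Fin (r + 2) → ℤ) : F :=
  q ^ (-(s * (n : ℤ)) - ∑ i, ν i * lam i) *
    ∏ p ∈ Finset.univ.filter (fun p : Fin (r + 2) × Fin (r + 2) => p.1 < p.2),
      σ (lam p.1 - lam p.2) ^ (ν p.1 - ν p.2)

/-- The linear action of s_i⁽ⁿ⁾ on P_a⁽ⁿ⁾ = nℤʳ ⊕ n²ℤδ written in the coordinates
nν + sn²δ ↦ (ν, s): for i ≠ 0 it permutes ν; for i = 0,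
s₀⁽ⁿ⁾ * (nν + sn²δ) = n(s_θν) + (s + ν₁ − ν_r)n²δ. -/
def linActScaled (r : ℕ) (i : Fin (r + 2)) (p : (Fin (r + 2) → ℤ) × ℤ) :
    (Fin (r + 2) → ℤ) × ℤ :=
  if i = 0 then
    (p.1 ∘ Equiv.swap 0 (Fin.last (r + 1)), p.2 + (p.1 0 - p.1 (Fin.last (r + 1))))
  else (p.1 ∘ Equiv.swap (i - 1) i, p.2)

/-- The affine action of s_i⁽ⁿ⁾ on ℤʳ. -/
def affActZ (r : ℕ) (n : ℤ) (i : Fin (r + 2)) (v : Fin (r + 2) → ℤ) : Fin (r + 2) → ℤ :=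
  if i = 0 then
    fun j => if j = 0 then v (Fin.last (r + 1)) + n
      else if j = Fin.last (r + 1) then v 0 - n else v j
  else v ∘ Equiv.swap (i - 1) i

/-!
Both sides are products over the pairs `a < b`. Let `τ` be the transposition underlying `s_i`
(`τ = (i-1 i)` for `i ≠ 0`, `τ = (0 last)` for `i = 0`). Reindexing the right-hand product along
`p ↦ (min (τ p.1) (τ p.2), max (τ p.1) (τ p.2))` matches it factor by factor with the left-hand
product, except at the pairs whose order `τ` reverses. There the two factors are `σ x ^ c` and
`σ y ^ (-c)` with `x + y ∈ {0, n, 2n}`, and `σ x * σ y = 1`: always when `x + y = n`, and when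
`x + y = 0` or `2n` unless `y = 0` resp. `y = n`; these two exceptions are exactly the fixed points
`s_i λ = λ`. The `δ`-shift of `s₀` compensates the translation in the affine action on the
`q`-exponent.
-/

open Finset

section PairProducts

variable {ι M : Type*} [LinearOrder ι]

theorem min_max_comp_min_max (g : ι → ι) (x y : ι) :
    (min (g (min x y)) (g (max x y)), max (g (min x y)) (g (max x y)))
      = (min (g x) (g y), max (g x) (g y)) := by
  rcases le_total x y with h | h <;> simp [h, min_comm, max_comm]

theorem swap_lt_swap_of_covBy {a b x y : ι} (hab : a ⋖ b) (hxy : x < y)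
    (h : Equiv.swap a b y < Equiv.swap a b x) : x = a ∧ y = b := by
  obtain ⟨hlt, hcov⟩ := hab
  simp only [Equiv.swap_apply_def] at h
  split_ifs at h <;> subst_vars <;> first | exact ⟨rfl, rfl⟩ | (exfalso; grind)

theorem prod_filter_lt_comp_perm [Fintype ι] [CommMonoid M] (τ : Equiv.Perm ι) (f : ι × ι → M) :
    ∏ p ∈ univ.filter (fun p : ι × ι => p.1 < p.2), f p
      = ∏ p ∈ univ.filter (fun p : ι × ι => p.1 < p.2),
          f (min (τ p.1) (τ p.2), max (τ p.1) (τ p.2)) := by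
  have sort_mem (g : Equiv.Perm ι) {p : ι × ι} (hp : p.1 < p.2) :
      min (g p.1) (g p.2) < max (g p.1) (g p.2) :=
    min_lt_max.2 (g.injective.ne hp.ne)
  symm
  refine prod_nbij' (fun p => (min (τ p.1) (τ p.2), max (τ p.1) (τ p.2)))
    (fun p => (min (τ.symm p.1) (τ.symm p.2), max (τ.symm p.1) (τ.symm p.2)))
    (fun p hp => ?_) (fun p hp => ?_) (fun p hp => ?_) (fun p hp => ?_) (fun _ _ => rfl)
  all_goals replace hp : p.1 < p.2 := by simpa using hp
  · simpa using sort_mem τ hp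
  · simpa using sort_mem τ.symm hp
  all_goals rw [min_max_comp_min_max]; simp [min_eq_left hp.le, max_eq_right hp.le]

theorem prod_zpow_comp_perm [Fintype ι] [DivisionCommMonoid M] (σ : ℤ → M) (τ : Equiv.Perm ι) (ν lam lam' : ι → ℤ)
    (hkeep : ∀ a b, a < b → τ a < τ b → σ (lam' (τ a) - lam' (τ b)) = σ (lam a - lam b))
    (hflip : ∀ a b, a < b → τ b < τ a → σ (lam' (τ b) - lam' (τ a)) * σ (lam a - lam b) = 1) :
    ∏ p ∈ univ.filter (fun p : ι × ι => p.1 < p.2), σ (lam' p.1 - lam' p.2) ^ (ν p.1 - ν p.2)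
      = ∏ p ∈ univ.filter (fun p : ι × ι => p.1 < p.2),
          σ (lam p.1 - lam p.2) ^ (ν (τ p.1) - ν (τ p.2)) := by
  rw [prod_filter_lt_comp_perm τ]
  refine prod_congr rfl fun p hp => ?_
  replace hp : p.1 < p.2 := by simpa using hp
  rcases lt_or_gt_of_ne (τ.injective.ne hp.ne) with h | h
  · rw [min_eq_left h.le, max_eq_right h.le, hkeep _ _ hp h]
  · rw [min_eq_right h.le, max_eq_left h.le, eq_inv_of_mul_eq_one_left (hflip _ _ hp h),
      inv_zpow', neg_sub]

end PairProducts

theorem gammaF_comp_perm {F : Type*} [Field F] (r n : ℕ) (q : F) (σ : ℤ → F)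
    (τ : Equiv.Perm (Fin (r + 2))) (ν lam lam' : Fin (r + 2) → ℤ) (s s' : ℤ)
    (hexp : s' * n + ∑ j, ν (τ j) * lam j = s * n + ∑ j, ν j * lam' j)
    (hkeep : ∀ a b, a < b → τ a < τ b → σ (lam' (τ a) - lam' (τ b)) = σ (lam a - lam b))
    (hflip : ∀ a b, a < b → τ b < τ a → σ (lam' (τ b) - lam' (τ a)) * σ (lam a - lam b) = 1) :
    gammaF r q σ n (ν ∘ τ) s' lam = gammaF r q σ n ν s lam' := by
  rw [gammaF, gammaF, prod_zpow_comp_perm σ τ ν lam lam' hkeep hflip]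
  simp only [Function.comp_apply]
  congr 2
  linarith

section Sigma

variable {F : Type*} [Field F] {n : ℕ} {k : F} {G σ : ℤ → F}

theorem sigma_of_dvd (hG0 : G 0 = k) (hGper : ∀ a : ℤ, G a = G (a % (n : ℤ)))
    (hσ : ∀ a : ℤ, σ a = if 0 < a ∧ (n : ℤ) ∣ a then k⁻¹ else G a) {a : ℤ} (ha : (n : ℤ) ∣ a) :
    σ a = if 0 < a then k⁻¹ else k := by
  rw [hσ, hGper, Int.emod_eq_zero_of_dvd ha, hG0]
  simp [ha]

theorem sigma_of_not_dvd (hσ : ∀ a : ℤ, σ a = if 0 < a ∧ (n : ℤ) ∣ a then k⁻¹ else G a)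
    {a : ℤ} (ha : ¬(n : ℤ) ∣ a) : σ a = G a := by
  rw [hσ, if_neg fun h => ha h.2]

theorem sigma_mul_sigma_of_add_eq_zero (hk : k ≠ 0) (hG0 : G 0 = k)
    (hGinv : ∀ a : ℤ, G a * G (-a) = 1) (hGper : ∀ a : ℤ, G a = G (a % (n : ℤ)))
    (hσ : ∀ a : ℤ, σ a = if 0 < a ∧ (n : ℤ) ∣ a then k⁻¹ else G a)
    {a b : ℤ} (hab : a + b = 0) (ha : a ≠ 0) : σ a * σ b = 1 := by
  obtain rfl : b = -a := by omega
  by_cases hd : (n : ℤ) ∣ a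
  · rw [sigma_of_dvd hG0 hGper hσ hd, sigma_of_dvd hG0 hGper hσ (dvd_neg.2 hd)]
    split_ifs <;> first | omega | field_simp
  · rw [sigma_of_not_dvd hσ hd, sigma_of_not_dvd hσ (mt dvd_neg.1 hd), hGinv]

theorem sigma_mul_sigma_of_add_eq (hn : 0 < n) (hk : k ≠ 0) (hG0 : G 0 = k)
    (hGinv : ∀ a : ℤ, G a * G (-a) = 1) (hGper : ∀ a : ℤ, G a = G (a % (n : ℤ)))
    (hσ : ∀ a : ℤ, σ a = if 0 < a ∧ (n : ℤ) ∣ a then k⁻¹ else G a)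
    {a b : ℤ} (hab : a + b = n) : σ a * σ b = 1 := by
  obtain rfl : b = -a + n * 1 := by omega
  have hdvd : (n : ℤ) ∣ -a + n * 1 ↔ (n : ℤ) ∣ a := by
    rw [dvd_add_left (dvd_mul_right _ _), dvd_neg]
  by_cases hd : (n : ℤ) ∣ a
  · rw [sigma_of_dvd hG0 hGper hσ hd, sigma_of_dvd hG0 hGper hσ (hdvd.2 hd)]
    split_ifs with h₁ h₂ h₂ <;> try field_simp
    · have := Int.le_of_dvd h₁ hd
      have := Int.le_of_dvd h₂ (hdvd.2 hd)
      omega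
    · omega
  · rw [sigma_of_not_dvd hσ hd, sigma_of_not_dvd hσ (mt hdvd.1 hd), hGper (-a + _),
      Int.add_mul_emod_self_left, ← hGper, hGinv]

theorem sigma_mul_sigma_of_add_eq_two_mul
    (hσneg : ∀ a b : ℤ, a + b = 0 → a ≠ 0 → σ a * σ b = 1)
    (hσn : ∀ a b : ℤ, a + b = n → σ a * σ b = 1)
    {a b : ℤ} (hab : a + b = 2 * n) (hb : b ≠ n) : σ a * σ b = 1 := by
  have h₁ : σ a = (σ (b - n))⁻¹ := eq_inv_of_mul_eq_one_left (hσn _ _ (by omega))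
  have h₂ : σ (n - b) = (σ (b - n))⁻¹ :=
    eq_inv_of_mul_eq_one_left (hσneg _ _ (by ring) (sub_ne_zero.2 hb.symm))
  rw [h₁, ← h₂, mul_comm, hσn _ _ (by ring)]

end Sigma

section Reflections

variable {F : Type*} [Field F] {r n : ℕ} {q : F} {σ : ℤ → F}

theorem gammaF_linActScaled_of_ne_zero
    (hσneg : ∀ a b : ℤ, a + b = 0 → a ≠ 0 → σ a * σ b = 1)
    {i : Fin (r + 2)} (hi : i ≠ 0) (ν : Fin (r + 2) → ℤ) (s : ℤ) {lam : Fin (r + 2) → ℤ}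
    (hmove : affActZ r n i lam ≠ lam) :
    gammaF r q σ n (linActScaled r i (ν, s)).1 (linActScaled r i (ν, s)).2 lam
      = gammaF r q σ n ν s (affActZ r n i lam) := by
  set τ := Equiv.swap (i - 1) i
  have hcov : i - 1 ⋖ i := by
    rw [Fin.covBy_iff, Nat.covBy_iff_add_one_eq, Fin.coe_sub_one, if_neg hi]
    have := Fin.pos_iff_ne_zero.2 hi
    omega
  have hne : lam (i - 1) ≠ lam i := fun h => hmove <| by
    rw [affActZ, if_neg hi, Equiv.comp_swap_eq_update, h, Function.update_eq_self,
      ← h, Function.update_eq_self]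
  simp only [linActScaled, affActZ, if_neg hi]
  apply gammaF_comp_perm
  · rw [← Equiv.sum_comp τ (fun j => ν j * (lam ∘ τ) j)]
    simp [τ]
  · intro a b _ _
    simp
  · intro a b hab h
    obtain ⟨rfl, rfl⟩ := swap_lt_swap_of_covBy hcov hab h
    simpa [τ] using hσneg _ _ (by ring) (sub_ne_zero.2 hne.symm)

theorem affActZ_zero_swap_apply (v : Fin (r + 2) → ℤ) (j : Fin (r + 2)) :
    affActZ r n 0 v (Equiv.swap 0 (Fin.last (r + 1)) j)
      = v j + (if j = Fin.last (r + 1) then (n : ℤ) else 0) - (if j = 0 then (n : ℤ) else 0) := by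
  have hL : Fin.last (r + 1) ≠ 0 := Fin.last_pos.ne'
  rcases eq_or_ne j 0 with rfl | h₀
  · simp [affActZ, hL]
  rcases eq_or_ne j (Fin.last (r + 1)) with rfl | hL'
  · simp [affActZ, hL]
  · simp [affActZ, Equiv.swap_apply_of_ne_of_ne h₀ hL', h₀, hL']

theorem gammaF_linActScaled_zero
    (hσneg : ∀ a b : ℤ, a + b = 0 → a ≠ 0 → σ a * σ b = 1)
    (hσn : ∀ a b : ℤ, a + b = n → σ a * σ b = 1)
    (ν : Fin (r + 2) → ℤ) (s : ℤ) {lam : Fin (r + 2) → ℤ}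
    (hmove : affActZ r n 0 lam ≠ lam) :
    gammaF r q σ n (linActScaled r 0 (ν, s)).1 (linActScaled r 0 (ν, s)).2 lam
      = gammaF r q σ n ν s (affActZ r n 0 lam) := by
  have hL : Fin.last (r + 1) ≠ 0 := Fin.last_pos.ne'
  have hne : lam 0 - lam (Fin.last (r + 1)) ≠ n := fun h => hmove <| funext fun j => by
    rcases eq_or_ne j 0 with rfl | h₀
    · simp [affActZ]; omega
    rcases eq_or_ne j (Fin.last (r + 1)) with rfl | hL'
    · simp [affActZ, hL]; omega
    · simp [affActZ, h₀, hL']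
  simp only [linActScaled, if_pos]
  apply gammaF_comp_perm
  case hexp =>
    rw [← Equiv.sum_comp (Equiv.swap 0 (Fin.last (r + 1))) (fun j => ν j * affActZ r n 0 lam j)]
    simp [affActZ_zero_swap_apply, mul_add, mul_sub, sum_add_distrib, sum_sub_distrib]
    ring
  all_goals
    intro a b hab h
    have hb₀ : b ≠ 0 := ((Fin.zero_le a).trans_lt hab).ne'
    have haL : a ≠ Fin.last (r + 1) := (hab.trans_le (Fin.le_last b)).ne
    rw [affActZ_zero_swap_apply, affActZ_zero_swap_apply]
  case hkeep =>
    have ha₀ : a ≠ 0 := by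
      rintro rfl
      exact h.not_ge (by simpa using Fin.le_last _)
    have hbL : b ≠ Fin.last (r + 1) := by
      rintro rfl
      exact h.not_ge (by simp)
    simp [ha₀, haL, hb₀, hbL]
  case hflip =>
    rcases eq_or_ne a 0 with rfl | ha₀ <;> rcases eq_or_ne b (Fin.last (r + 1)) with rfl | hbL
    · simp only [if_pos, if_neg hL, if_neg haL]
      exact sigma_mul_sigma_of_add_eq_two_mul hσneg hσn (by ring) hne
    · simp only [if_pos, if_neg hbL, if_neg hb₀, if_neg hL.symm]
      exact hσn _ _ (by ring)
    · simp only [if_pos, if_neg ha₀, if_neg haL, if_neg hL]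
      exact hσn _ _ (by ring)
    · simp [Equiv.swap_apply_of_ne_of_ne, ha₀, haL, hb₀, hbL] at h
      exact absurd hab h.not_gt

end Reflections

theorem stmt5_general {F : Type*} [Field F] (r n : ℕ) (hn : 0 < n)
    (k q : F) (hk : k ≠ 0)
    (G : ℤ → F) (hG0 : G 0 = k) (hGinv : ∀ a : ℤ, G a * G (-a) = 1)
    (hGper : ∀ a : ℤ, G a = G (a % (n : ℤ)))
    (σ : ℤ → F) (hσ : ∀ a : ℤ, σ a = if 0 < a ∧ (n : ℤ) ∣ a then k⁻¹ else G a)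
    (i : Fin (r + 2)) (ν : Fin (r + 2) → ℤ) (s : ℤ) (lam : Fin (r + 2) → ℤ)
    (hmove : affActZ r n i lam ≠ lam) :
    gammaF r q σ n (linActScaled r i (ν, s)).1 (linActScaled r i (ν, s)).2 lam
      = gammaF r q σ n ν s (affActZ r n i lam) := by
  have hσneg : ∀ a b : ℤ, a + b = 0 → a ≠ 0 → σ a * σ b = 1 := fun _ _ =>
    sigma_mul_sigma_of_add_eq_zero hk hG0 hGinv hGper hσ
  have hσn : ∀ a b : ℤ, a + b = n → σ a * σ b = 1 := fun _ _ =>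
    sigma_mul_sigma_of_add_eq hn hk hG0 hGinv hGper hσ
  rcases eq_or_ne i 0 with rfl | hi
  · exact gammaF_linActScaled_zero hσneg hσn ν s hmove
  · exact gammaF_linActScaled_of_ne_zero hσneg hi ν s hmove

/-- for μ̂ ∈ P_a⁽ⁿ⁾, λ ∈ ℤʳ and 0 ≤ i ≤ r−1 with s_i⁽ⁿ⁾λ ≠ λ,
γ(s_i⁽ⁿ⁾ * μ̂; λ) = γ(μ̂; s_i⁽ⁿ⁾λ). -/
theorem stmt5 {F : Type*} [Field F] (r n : ℕ) (hn : 0 < n)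
    (k q : F) (hk : k ≠ 0) (hq : q ≠ 0)
    (G : ℤ → F) (hG0 : G 0 = k) (hGinv : ∀ a : ℤ, G a * G (-a) = 1)
    (hGper : ∀ a : ℤ, G a = G (a % (n : ℤ))) (hGne : ∀ a : ℤ, G a ≠ 0)
    (σ : ℤ → F) (hσ : ∀ a : ℤ, σ a = if 0 < a ∧ (n : ℤ) ∣ a then k⁻¹ else G a)
    (i : Fin (r + 2)) (ν : Fin (r + 2) → ℤ) (s : ℤ) (lam : Fin (r + 2) → ℤ)
    (hmove : affActZ r n i lam ≠ lam) :
    gammaF r q σ n (linActScaled r i (ν, s)).1 (linActScaled r i (ν, s)).2 lam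
      = gammaF r q σ n ν s (affActZ r n i lam) :=
  stmt5_general r n hn k q hk G hG0 hGinv hGper σ hσ i ν s lam hmove
end

section
/- Under the assumption 0 ≤ (s_iμ, α_i), i.e. −n ≤ (μ, α_i) ≤ 0, the inverse operator satisfies π⁽ⁿ⁾(T_i⁻¹)x^μ = σ((s_iμ, α_i))⁻¹ · x^{s_iμ}. -/
/-- The monomial x^λ in the Laurent polynomial ring F[x₁^{±1}, …, x_r^{±1}],
realized as the group algebra of the weight lattice ℤʳ. -/
noncomputable def Xm {F : Type*} [Field F] (r : ℕ) (lam : Fin (r + 2) → ℤ) :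
    AddMonoidAlgebra F (Fin (r + 2) → ℤ) :=
  AddMonoidAlgebra.single lam 1

/-- The root ε_a − ε_b ∈ ℤʳ. -/
def alphaN (r : ℕ) (a b : Fin (r + 2)) : Fin (r + 2) → ℤ :=
  fun t => if t = a then 1 else if t = b then -1 else 0

/-- The defining relation of the SSV operator π⁽ⁿ⁾(T) attached to the root α = ε_a − ε_b,
with denominators cleared (the Laurent polynomial ring is an integral domain and
1 − x^{nα} ≠ 0, so this determines T on monomials):
(1 − x^{nα})·T(x^λ) = (k − k⁻¹)(x^λ − x^{λ − tₙ((λ,α))α}) + G_{(λ,α)}(1 − x^{nα})x^{s_αλ},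
where tₙ(d) = d − (d mod n). -/
def heckeRel {F : Type*} [Field F] (r n : ℕ) (k : F) (G : ℤ → F) (a b : Fin (r + 2))
    (T : AddMonoidAlgebra F (Fin (r + 2) → ℤ) → AddMonoidAlgebra F (Fin (r + 2) → ℤ)) :
    Prop :=
  ∀ lam : Fin (r + 2) → ℤ,
    (1 - Xm r ((n : ℤ) • alphaN r a b)) * T (Xm r lam)
      = (k - k⁻¹) •
          (Xm r lam
            - Xm r (lam - ((lam a - lam b) - (lam a - lam b) % (n : ℤ)) • alphaN r a b))
        + G (lam a - lam b) •
            ((1 - Xm r ((n : ℤ) • alphaN r a b)) * Xm r (lam ∘ Equiv.swap a b))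

/-!
On a monomial x^μ with (μ, α_i) = d, the cleared Hecke relation can be divided by 1 − x^{nα_i},
which is nonzero in the Laurent polynomial domain. For −n ≤ d < 0 one has tₙ(d) = −n, so the
first term is (k − k⁻¹)(1 − x^{nα_i})x^μ and T_i x^μ = (k − k⁻¹)x^μ + G_d x^{s_iμ}; for d = 0 it
vanishes and T_i x^μ = G_0 x^μ = k x^μ. Subtracting (k − k⁻¹)x^μ leaves G_d x^{s_iμ}, resp.
k⁻¹x^μ, and G_d = σ(−d)⁻¹ by G_d G_{−d} = 1, or, at d = −n, by n-periodicity of G.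
-/

lemma Function.comp_swap_eq_self {α β : Type*} [DecidableEq α] {f : α → β} {a b : α}
    (h : f a = f b) : f ∘ Equiv.swap a b = f := by
  rw [Equiv.comp_swap_eq_update, h, Function.update_eq_self, ← h, Function.update_eq_self]

lemma Xm_add {F : Type*} [Field F] (r : ℕ) (x y : Fin (r + 2) → ℤ) :
    Xm (F := F) r (x + y) = Xm r x * Xm r y := by
  simp [Xm, AddMonoidAlgebra.single_mul_single]

lemma one_sub_Xm_ne_zero {F : Type*} [Field F] {r : ℕ} {c : Fin (r + 2) → ℤ} (hc : c ≠ 0) :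
    (1 : AddMonoidAlgebra F (Fin (r + 2) → ℤ)) - Xm r c ≠ 0 := by
  rw [sub_ne_zero, Xm, AddMonoidAlgebra.one_def, Ne,
    AddMonoidAlgebra.single_left_inj one_ne_zero]
  exact hc.symm

lemma natCast_smul_alphaN_ne_zero {r n : ℕ} (hn : 0 < n) (a b : Fin (r + 2)) :
    (n : ℤ) • alphaN r a b ≠ 0 := fun h => by
  have := congrFun h a
  simp [alphaN] at this
  omega

lemma Int.emod_eq_add_self_of_neg {d n : ℤ} (h0 : -n ≤ d) (h1 : d < 0) : d % n = d + n := by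
  rw [← Int.add_emod_right, Int.emod_eq_of_lt (by omega) (by omega)]

namespace heckeRel

variable {F : Type*} [Field F] {r n : ℕ} {k : F} {G : ℤ → F} {a b : Fin (r + 2)}
  {T : AddMonoidAlgebra F (Fin (r + 2) → ℤ) → AddMonoidAlgebra F (Fin (r + 2) → ℤ)}

theorem apply_of_nonneg_of_lt (hT : heckeRel r n k G a b T) (hn : 0 < n)
    {lam : Fin (r + 2) → ℤ} (h0 : 0 ≤ lam a - lam b) (h1 : lam a - lam b < n) :
    T (Xm r lam) = G (lam a - lam b) • Xm r (lam ∘ Equiv.swap a b) := by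
  refine mul_left_cancel₀ (one_sub_Xm_ne_zero (natCast_smul_alphaN_ne_zero hn a b)) ?_
  rw [hT lam, Int.emod_eq_of_lt h0 h1, sub_self, zero_smul, sub_zero, sub_self, smul_zero,
    zero_add, mul_smul_comm]

theorem apply_of_neg (hT : heckeRel r n k G a b T) (hn : 0 < n)
    {lam : Fin (r + 2) → ℤ} (h0 : -(n : ℤ) ≤ lam a - lam b) (h1 : lam a - lam b < 0) :
    T (Xm r lam)
      = (k - k⁻¹) • Xm r lam + G (lam a - lam b) • Xm r (lam ∘ Equiv.swap a b) := by
  refine mul_left_cancel₀ (one_sub_Xm_ne_zero (natCast_smul_alphaN_ne_zero hn a b)) ?_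
  rw [hT lam, Int.emod_eq_add_self_of_neg h0 h1,
    show lam a - lam b - (lam a - lam b + n) = -(n : ℤ) by ring, neg_smul, sub_neg_eq_add,
    Xm_add, mul_add, mul_smul_comm, mul_smul_comm, ← mul_one_sub, mul_comm]

end heckeRel

lemma inv_sigma_neg_eq {F : Type*} [Field F] {n : ℕ} {k : F} {G σ : ℤ → F}
    (hG0 : G 0 = k) (hGinv : ∀ a : ℤ, G a * G (-a) = 1)
    (hGper : ∀ a : ℤ, G a = G (a % (n : ℤ)))
    (hσ : ∀ a : ℤ, σ a = if 0 < a ∧ (n : ℤ) ∣ a then k⁻¹ else G a)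
    {d : ℤ} (hd : -(n : ℤ) ≤ d) :
    (σ (-d))⁻¹ = G d := by
  rw [hσ]
  split_ifs with hdvd
  · obtain ⟨hpos, hndvd⟩ := hdvd
    have hdn : d = -n := by have := Int.le_of_dvd hpos hndvd; omega
    rw [inv_inv, hGper, hdn, Int.neg_emod_self, hG0]
  · exact (eq_inv_of_mul_eq_one_left (hGinv d)).symm

theorem stmt16_general {F : Type*} [Field F] (r n : ℕ) (hn : 0 < n)
    (k : F)
    (G : ℤ → F) (hG0 : G 0 = k) (hGinv : ∀ a : ℤ, G a * G (-a) = 1)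
    (hGper : ∀ a : ℤ, G a = G (a % (n : ℤ)))
    (σ : ℤ → F) (hσ : ∀ a : ℤ, σ a = if 0 < a ∧ (n : ℤ) ∣ a then k⁻¹ else G a)
    (i : Fin (r + 1))
    (Ti : AddMonoidAlgebra F (Fin (r + 2) → ℤ) → AddMonoidAlgebra F (Fin (r + 2) → ℤ))
    (hTi : heckeRel r n k G i.castSucc i.succ Ti)
    (μ : Fin (r + 2) → ℤ)
    (h0 : -(n : ℤ) ≤ μ i.castSucc - μ i.succ) (h1 : μ i.castSucc - μ i.succ ≤ 0) :
    Ti (Xm r μ) - (k - k⁻¹) • Xm r μ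
      = (σ (μ i.succ - μ i.castSucc))⁻¹ • Xm r (μ ∘ Equiv.swap i.castSucc i.succ) := by
  rw [show μ i.succ - μ i.castSucc = -(μ i.castSucc - μ i.succ) by ring]
  rcases h1.lt_or_eq with hneg | hzero
  · rw [hTi.apply_of_neg hn h0 hneg, add_sub_cancel_left,
      inv_sigma_neg_eq hG0 hGinv hGper hσ h0]
  · rw [hTi.apply_of_nonneg_of_lt hn hzero.ge (by omega), hzero, neg_zero, hσ 0,
      if_neg (fun h => h.1.false), hG0, Function.comp_swap_eq_self (by omega), ← sub_smul,
      sub_sub_cancel]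

/-- with T_i⁻¹ = T_i − k + k⁻¹ (from the Hecke relation), if
−n ≤ (μ, α_i) ≤ 0 (i.e. 0 ≤ (s_iμ, α_i) ≤ n) then
π⁽ⁿ⁾(T_i⁻¹)x^μ = σ((s_iμ, α_i))⁻¹ · x^{s_iμ}. -/
theorem stmt16 {F : Type*} [Field F] (r n : ℕ) (hn : 0 < n)
    (k : F) (hk : k ≠ 0)
    (G : ℤ → F) (hG0 : G 0 = k) (hGinv : ∀ a : ℤ, G a * G (-a) = 1)
    (hGper : ∀ a : ℤ, G a = G (a % (n : ℤ)))
    (σ : ℤ → F) (hσ : ∀ a : ℤ, σ a = if 0 < a ∧ (n : ℤ) ∣ a then k⁻¹ else G a)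
    (i : Fin (r + 1))
    (Ti : AddMonoidAlgebra F (Fin (r + 2) → ℤ) → AddMonoidAlgebra F (Fin (r + 2) → ℤ))
    (hTi : heckeRel r n k G i.castSucc i.succ Ti)
    (μ : Fin (r + 2) → ℤ)
    (h0 : -(n : ℤ) ≤ μ i.castSucc - μ i.succ) (h1 : μ i.castSucc - μ i.succ ≤ 0) :
    Ti (Xm r μ) - (k - k⁻¹) • Xm r μ
      = (σ (μ i.succ - μ i.castSucc))⁻¹ • Xm r (μ ∘ Equiv.swap i.castSucc i.succ) :=
  stmt16_general r n hn k G hG0 hGinv hGper σ hσ i Ti hTi μ h0 h1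
end
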